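/- Let Δ be a PR complex over a field K, and let σ_1, σ_2 be faces of Δ with H̃_{i_1}(link_Δ σ_1; K) ≠ 0 and H̃_{i_2}(link_Δ σ_2; K) ≠ 0. If |σ_1| < |σ_2| then i_1 > i_2. -/

import Mathlib

open Finset

namespace SRPure

variable {V : Type*}

/-- A downward closed set of finite sets: the faces of an abstract simplicial complex. -/
def IsDown (Δ : Set (Finset V)) : Prop := ∀ s ∈ Δ, ∀ t ⊆ s, t ∈ Δ

/-- A facet is a maximal face. -/
def IsFacet (Δ : Set (Finset V)) (F : Finset V) : Prop :=
  F ∈ Δ ∧ ∀ G ∈ Δ, F ⊆ G → F = G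

section Link

variable [DecidableEq V]

/-- The link of a face `σ`. -/
def link (Δ : Set (Finset V)) (σ : Finset V) : Set (Finset V) :=
  {τ | Disjoint τ σ ∧ τ ∪ σ ∈ Δ}

theorem link_down {Δ : Set (Finset V)} (hΔ : IsDown Δ) (σ : Finset V) :
    IsDown (link Δ σ) := by
  rintro s ⟨hd, hu⟩ t hts
  exact ⟨hd.mono_left hts, hΔ _ hu _ (Finset.union_subset_union hts (Finset.Subset.refl σ))⟩

end Link

section Homology

variable (K : Type*) [Field K] [LinearOrder V]

/-- Simplicial chains spanned by the faces of cardinality `c`. -/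
abbrev Chains (Δ : Set (Finset V)) (c : ℕ) : Type _ :=
  {s : Finset V // s ∈ Δ ∧ s.card = c} →₀ K

/-- The boundary of a single face of cardinality `c+1`. -/
noncomputable def faceBdry {Δ : Set (Finset V)} (hΔ : IsDown Δ) (c : ℕ)
    (s : {s : Finset V // s ∈ Δ ∧ s.card = c + 1}) : Chains K Δ c :=
  ∑ v ∈ s.1.attach,
    ((-1 : K) ^ ((s.1.filter (fun w => w < v.1)).card)) •
      Finsupp.single
        ⟨s.1.erase v.1, hΔ _ s.2.1 _ (Finset.erase_subset _ _),
          by simp [Finset.card_erase_of_mem v.2, s.2.2]⟩ (1 : K)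

/-- The simplicial boundary map. -/
noncomputable def bdry {Δ : Set (Finset V)} (hΔ : IsDown Δ) (c : ℕ) :
    Chains K Δ (c + 1) →ₗ[K] Chains K Δ c :=
  Finsupp.lsum K fun s => LinearMap.toSpanSingleton K _ (faceBdry K hΔ c s)

/-- Reduced cycles in cardinality `c` (homological degree `c - 1`). -/
noncomputable def cycles {Δ : Set (Finset V)} (hΔ : IsDown Δ) :
    (c : ℕ) → Submodule K (Chains K Δ c)
  | 0 => ⊤
  | c + 1 => LinearMap.ker (bdry K hΔ c)

/-- `RH K hΔ c` is the reduced simplicial homology (with coefficients in `K`) of the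
complex in homological degree `c - 1`, indexed by the cardinality `c` of faces; so
`RH K hΔ 0` is `H̃₋₁` and `RH K hΔ (i+1)` is `H̃ᵢ`. -/
noncomputable abbrev RH {Δ : Set (Finset V)} (hΔ : IsDown Δ) (c : ℕ) :=
  @HasQuotient.Quotient (cycles K hΔ c) (Submodule K (cycles K hΔ c))
    (Submodule.hasQuotient (R := K) (M := cycles K hΔ c))
    (Submodule.comap (cycles K hΔ c).subtype (LinearMap.range (bdry K hΔ c)))

/-- A complex is PR (has a "pure resolution") over `K` if links of faces of different
sizes never have nontrivial reduced homology in the same degree. -/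
def IsPR {Δ : Set (Finset V)} (hΔ : IsDown Δ) : Prop :=
  ∀ σ ∈ Δ, ∀ τ ∈ Δ, ∀ c : ℕ,
    Nontrivial (RH K (link_down hΔ σ) c) →
    Nontrivial (RH K (link_down hΔ τ) c) → σ.card = τ.card

end Homology

end SRPure


/-!
Everything rests on one step: if `H̃_{c+1}(lk σ) ≠ 0` then `H̃_c(lk τ) ≠ 0` for some `τ ⊋ σ`.
Granting it, if `c₁ ≤ c₂` then iterating from `σ₂` reaches `τ ⊇ σ₂` with
`H̃_{c₁}(lk τ) ≠ 0`, and PR forces `|τ| = |σ₁| < |σ₂| ≤ |τ|`.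

The step comes from the exact sequence of a complex `Γ` split at a vertex `u` into its deletion
and the cone `u * lk_Γ u`,
`H̃_{c+1}(Γ ∖ u) → H̃_{c+1}(Γ) → H̃_c(lk_Γ u) → H̃_c(Γ ∖ u) → H̃_c(Γ)`,
applied to the windows `lk σ|_W` (induced on vertex sets `W`), which both operations preserve:
`lk σ|_W ∖ u = lk σ|_{W - u}` and `lk_{lk σ|_W} u = lk (σ ∪ u)|_{W - u}`.
Shrinking `W` to `∅` kills every class, so some class passes, one degree lower, to a window of
`lk (σ ∪ u)`; growing that window back to all vertices keeps a class alive, in the links of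
possibly larger faces.
-/

namespace SRPure

section Complexes

variable {V : Type*}

def deletion (Δ : Set (Finset V)) (u : V) : Set (Finset V) := {s | s ∈ Δ ∧ u ∉ s}

def restrict (Δ : Set (Finset V)) (W : Finset V) : Set (Finset V) := {s | s ∈ Δ ∧ s ⊆ W}

theorem deletion_down {Δ : Set (Finset V)} (hΔ : IsDown Δ) (u : V) : IsDown (deletion Δ u) :=
  fun _ hs _ hts => ⟨hΔ _ hs.1 _ hts, fun hu => hs.2 (hts hu)⟩

theorem deletion_subset (Δ : Set (Finset V)) (u : V) : deletion Δ u ⊆ Δ := fun _ hs => hs.1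

theorem restrict_down {Δ : Set (Finset V)} (hΔ : IsDown Δ) (W : Finset V) :
    IsDown (restrict Δ W) :=
  fun _ hs _ hts => ⟨hΔ _ hs.1 _ hts, hts.trans hs.2⟩

theorem restrict_univ [Fintype V] (Δ : Set (Finset V)) : restrict Δ univ = Δ := by
  ext s; simp [restrict]

variable [DecidableEq V]

theorem deletion_restrict (Δ : Set (Finset V)) (W : Finset V) (u : V) :
    deletion (restrict Δ W) u = restrict Δ (W.erase u) := by
  ext s
  simp only [deletion, restrict, Set.mem_ofPred_eq, subset_erase]
  tauto

theorem mem_link_singleton {Δ : Set (Finset V)} {u : V} {τ : Finset V} :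
    τ ∈ link Δ {u} ↔ u ∉ τ ∧ insert u τ ∈ Δ := by
  rw [link, Set.mem_ofPred_eq, disjoint_singleton_right, union_comm, ← insert_eq]

theorem link_singleton_subset {Δ : Set (Finset V)} (hΔ : IsDown Δ) (u : V) :
    link Δ {u} ⊆ Δ :=
  fun _ hτ => hΔ _ (mem_link_singleton.1 hτ).2 _ (subset_insert _ _)

theorem restrict_link_congr {Δ : Set (Finset V)} {σ W W' : Finset V}
    (h : ∀ v ∉ σ, v ∈ W ↔ v ∈ W') : restrict (link Δ σ) W = restrict (link Δ σ) W' := by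
  have key : ∀ {W W' : Finset V}, (∀ v ∉ σ, v ∈ W → v ∈ W') →
      restrict (link Δ σ) W ⊆ restrict (link Δ σ) W' :=
    fun hWW' τ ⟨hτ, hτW⟩ => ⟨hτ, fun v hv =>
      hWW' v (disjoint_left.1 hτ.1 hv) (hτW hv)⟩
  exact (key fun v hv => (h v hv).1).antisymm (key fun v hv => (h v hv).2)

theorem link_singleton_restrict_link {Δ : Set (Finset V)} {σ W : Finset V} {u : V}
    (huσ : u ∉ σ) (huW : u ∈ W) :
    link (restrict (link Δ σ) W) {u} = restrict (link Δ (insert u σ)) (W.erase u) := by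
  ext τ
  rw [mem_link_singleton]
  simp only [restrict, link, Set.mem_ofPred_eq, disjoint_insert_left, disjoint_insert_right,
    subset_erase, insert_union, union_insert, insert_subset_iff]
  constructor
  · rintro ⟨hu, ⟨⟨-, hd⟩, hm⟩, -, hsub⟩
    exact ⟨⟨⟨hu, hd⟩, hm⟩, hsub, hu⟩
  · rintro ⟨⟨⟨hu, hd⟩, hm⟩, hsub, -⟩
    exact ⟨hu, ⟨⟨huσ, hd⟩, hm⟩, huW, hsub⟩

end Complexes

section Chains

variable {V : Type*} {K : Type*} [Field K]

variable (K) in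
/-- The elementary chain of a face of cardinality `c`; zero for any other finset. -/
noncomputable def faceChain (Δ : Set (Finset V)) (c : ℕ) (t : Finset V) : Chains K Δ c :=
  open Classical in
  if h : t ∈ Δ ∧ t.card = c then Finsupp.single ⟨t, h⟩ 1 else 0

theorem faceChain_of_mem {Δ : Set (Finset V)} {c : ℕ} {t : Finset V} (ht : t ∈ Δ)
    (hc : t.card = c) : faceChain K Δ c t = Finsupp.single ⟨t, ht, hc⟩ 1 := by
  rw [faceChain, dif_pos ⟨ht, hc⟩]

theorem faceChain_of_notMem {Δ : Set (Finset V)} {c : ℕ} {t : Finset V} (ht : t ∉ Δ) :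
    faceChain K Δ c t = 0 := by
  rw [faceChain, dif_neg fun h => ht h.1]

noncomputable def liftChains {Γ Γ' : Set (Finset V)} {n m : ℕ}
    (f : Finset V → Chains K Γ' m) : Chains K Γ n →ₗ[K] Chains K Γ' m :=
  Finsupp.lsum K fun s => LinearMap.toSpanSingleton K _ (f s.1)

theorem liftChains_faceChain {Γ Γ' : Set (Finset V)} {n m : ℕ} (f : Finset V → Chains K Γ' m)
    {t : Finset V} (ht : t ∈ Γ) (hc : t.card = n) :
    liftChains f (faceChain K Γ n t) = f t := by
  rw [faceChain_of_mem ht hc, liftChains, Finsupp.lsum_single,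
    LinearMap.toSpanSingleton_apply, one_smul]

theorem Chains.linearMap_ext {Γ : Set (Finset V)} {n : ℕ} {M : Type*} [AddCommGroup M]
    [Module K M] {f g : Chains K Γ n →ₗ[K] M}
    (h : ∀ t ∈ Γ, t.card = n → f (faceChain K Γ n t) = g (faceChain K Γ n t)) : f = g :=
  Finsupp.lhom_ext' fun s => LinearMap.ext_ring <| by
    simpa only [LinearMap.comp_apply, Finsupp.lsingle_apply, faceChain_of_mem s.2.1 s.2.2]
      using h s.1 s.2.1 s.2.2

variable [LinearOrder V]

variable (K) in
def faceSign (t : Finset V) (v : V) : K := (-1) ^ #{w ∈ t | w < v}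

theorem faceSign_mul_self (t : Finset V) (v : V) : faceSign K t v * faceSign K t v = 1 := by
  rw [faceSign, ← mul_pow]; norm_num

theorem faceSign_insert {t : Finset V} {v : V} (u : V) (hv : v ∉ t) :
    faceSign K (insert v t) u = (if v < u then -1 else 1) * faceSign K t u := by
  rw [faceSign, faceSign, filter_insert]
  split_ifs with h
  · rw [card_insert_of_notMem fun hc => hv (mem_filter.1 hc).1, pow_succ, mul_comm]
  · rw [one_mul]

theorem faceSign_erase {t : Finset V} {v : V} (u : V) (hv : v ∈ t) :
    faceSign K (t.erase v) u = (if v < u then -1 else 1) * faceSign K t u := by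
  have h := faceSign_insert (K := K) u (notMem_erase v t)
  rw [insert_erase hv] at h
  split_ifs at h ⊢ <;> simp [h]

theorem faceSign_insert_self {t : Finset V} {u : V} (hu : u ∉ t) :
    faceSign K (insert u t) u = faceSign K t u := by
  rw [faceSign_insert u hu, if_neg (lt_irrefl u), one_mul]

theorem faceSign_erase_self {t : Finset V} {u : V} (hu : u ∈ t) :
    faceSign K (t.erase u) u = faceSign K t u := by
  rw [faceSign_erase u hu, if_neg (lt_irrefl u), one_mul]

theorem faceSign_mul_faceSign_erase_swap {t : Finset V} {u v : V} (hu : u ∈ t) (hv : v ∈ t)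
    (huv : u ≠ v) :
    faceSign K t v * faceSign K (t.erase v) u = -(faceSign K t u * faceSign K (t.erase u) v) := by
  rw [faceSign_erase u hv, faceSign_erase v hu]
  rcases huv.lt_or_gt with h | h
  · rw [if_pos h, if_neg h.not_gt]; ring
  · rw [if_neg h.not_gt, if_pos h]; ring

theorem faceSign_mul_faceSign_insert {t : Finset V} {u v : V} (hu : u ∉ t) (hv : v ∈ t) :
    faceSign K t u * faceSign K (insert u t) v = -(faceSign K t v * faceSign K (t.erase v) u) := by
  rw [faceSign_insert v hu, faceSign_erase u hv]
  rcases (ne_of_mem_of_not_mem hv hu).symm.lt_or_gt with h | h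
  · rw [if_pos h, if_neg h.not_gt]; ring
  · rw [if_neg h.not_gt, if_pos h]; ring

theorem bdry_faceChain {Δ : Set (Finset V)} (hΔ : IsDown Δ) {c : ℕ} {t : Finset V}
    (ht : t ∈ Δ) (hc : t.card = c + 1) :
    bdry K hΔ c (faceChain K Δ (c + 1) t) =
      ∑ v ∈ t, faceSign K t v • faceChain K Δ c (t.erase v) := by
  rw [faceChain_of_mem ht hc, bdry, Finsupp.lsum_single, LinearMap.toSpanSingleton_apply,
    one_smul, faceBdry, ← sum_attach t]
  refine sum_congr rfl fun v _ => ?_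
  rw [faceChain_of_mem (hΔ _ ht _ (erase_subset _ _))
    (by rw [card_erase_of_mem v.2, hc, Nat.add_sub_cancel])]
  rfl

end Chains

section ChainMaps

variable {V : Type*} {K : Type*} [Field K]

variable (K) in
/-- Sends each face of `Γ` to the same face of `Γ'`, or to zero if it is not one: the
inclusion of chains when `Γ ⊆ Γ'`, the projection when `Γ' ⊆ Γ`. -/
noncomputable def transfer {Γ : Set (Finset V)} (Γ' : Set (Finset V)) (n : ℕ) :
    Chains K Γ n →ₗ[K] Chains K Γ' n :=
  liftChains (faceChain K Γ' n)

theorem transfer_faceChain {Γ : Set (Finset V)} (Γ' : Set (Finset V)) {n : ℕ} {t : Finset V}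
    (ht : t ∈ Γ) (hc : t.card = n) :
    transfer K Γ' n (faceChain K Γ n t) = faceChain K Γ' n t :=
  liftChains_faceChain _ ht hc

theorem transfer_transfer {Γ Γ' : Set (Finset V)} (h : Γ ⊆ Γ') {n : ℕ} (z : Chains K Γ n) :
    transfer K Γ n (transfer K Γ' n z) = z :=
  LinearMap.congr_fun (f := transfer K Γ n ∘ₗ transfer K Γ' n) (g := LinearMap.id)
    (Chains.linearMap_ext fun t ht hc => by
      rw [LinearMap.comp_apply, transfer_faceChain _ ht hc, transfer_faceChain _ (h ht) hc,
        LinearMap.id_apply]) z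

variable [LinearOrder V]

theorem transfer_bdry {Γ₁ Γ₂ : Set (Finset V)} (h₁ : IsDown Γ₁) (h₂ : IsDown Γ₂) (h : Γ₁ ⊆ Γ₂)
    {c : ℕ} (z : Chains K Γ₁ (c + 1)) :
    transfer K Γ₂ c (bdry K h₁ c z) = bdry K h₂ c (transfer K Γ₂ (c + 1) z) :=
  LinearMap.congr_fun (f := transfer K Γ₂ c ∘ₗ bdry K h₁ c)
    (g := bdry K h₂ c ∘ₗ transfer K Γ₂ (c + 1))
    (Chains.linearMap_ext fun t ht hc => by
      rw [LinearMap.comp_apply, LinearMap.comp_apply, bdry_faceChain h₁ ht hc, map_sum,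
        transfer_faceChain _ ht hc, bdry_faceChain h₂ (h ht) hc]
      refine sum_congr rfl fun v hv => ?_
      rw [map_smul, transfer_faceChain _ (h₁ _ ht _ (erase_subset _ _))
        (by rw [card_erase_of_mem hv, hc, Nat.add_sub_cancel])]) z

variable (K) in
/-- The `u`-coefficient of a chain, as a chain on the link of `u`. -/
noncomputable def linkProj {Γ : Set (Finset V)} (u : V) (n : ℕ) :
    Chains K Γ (n + 1) →ₗ[K] Chains K (link Γ {u}) n :=
  liftChains fun s => if u ∈ s then faceSign K s u • faceChain K _ n (s.erase u) else 0

variable (K) in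
/-- The cone `τ ↦ u * τ`, signed so that `∂ (u * z) = z - u * ∂ z` (`bdry_cone`). -/
noncomputable def cone {Γ : Set (Finset V)} (u : V) (n : ℕ) :
    Chains K (link Γ {u}) n →ₗ[K] Chains K Γ (n + 1) :=
  liftChains fun t => faceSign K t u • faceChain K Γ (n + 1) (insert u t)

theorem linkProj_faceChain {Γ : Set (Finset V)} {u : V} {n : ℕ} {s : Finset V} (hs : s ∈ Γ)
    (hc : s.card = n + 1) :
    linkProj K u n (faceChain K Γ (n + 1) s) =
      if u ∈ s then faceSign K s u • faceChain K (link Γ {u}) n (s.erase u) else 0 :=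
  liftChains_faceChain _ hs hc

theorem cone_faceChain {Γ : Set (Finset V)} {u : V} {n : ℕ} {t : Finset V}
    (ht : t ∈ link Γ {u}) (hc : t.card = n) :
    cone K u n (faceChain K (link Γ {u}) n t) =
      faceSign K t u • faceChain K Γ (n + 1) (insert u t) :=
  liftChains_faceChain _ ht hc

theorem linkProj_transfer {Γ₁ Γ : Set (Finset V)} (h : Γ₁ ⊆ Γ) {u : V} (hu : ∀ s ∈ Γ₁, u ∉ s)
    {n : ℕ} (z : Chains K Γ₁ (n + 1)) : linkProj K u n (transfer K Γ (n + 1) z) = 0 :=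
  LinearMap.congr_fun (f := linkProj K u n ∘ₗ transfer K Γ (n + 1)) (g := 0)
    (Chains.linearMap_ext fun t ht hc => by
      rw [LinearMap.comp_apply, transfer_faceChain _ ht hc, linkProj_faceChain (h ht) hc,
        if_neg (hu t ht), LinearMap.zero_apply]) z

theorem linkProj_cone {Γ : Set (Finset V)} {u : V} {n : ℕ} (z : Chains K (link Γ {u}) n) :
    linkProj K u n (cone K u n z) = z :=
  LinearMap.congr_fun (f := linkProj K u n ∘ₗ cone K u n) (g := LinearMap.id)
    (Chains.linearMap_ext fun t ht hc => by
      obtain ⟨hut, hins⟩ := mem_link_singleton.1 ht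
      rw [LinearMap.comp_apply, cone_faceChain ht hc, map_smul,
        linkProj_faceChain hins (by rw [card_insert_of_notMem hut, hc]),
        if_pos (mem_insert_self u t), erase_insert hut, faceSign_insert_self hut, smul_smul,
        faceSign_mul_self, one_smul, LinearMap.id_apply]) z

theorem transfer_add_cone_linkProj {Γ : Set (Finset V)} (u : V) {n : ℕ}
    (z : Chains K Γ (n + 1)) :
    transfer K Γ (n + 1) (transfer K (deletion Γ u) (n + 1) z) + cone K u n (linkProj K u n z) =
      z :=
  LinearMap.congr_fun
    (f := transfer K Γ (n + 1) ∘ₗ transfer K (deletion Γ u) (n + 1) +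
      cone K u n ∘ₗ linkProj K u n)
    (g := LinearMap.id)
    (Chains.linearMap_ext fun s hs hc => by
      rw [LinearMap.add_apply, LinearMap.comp_apply, LinearMap.comp_apply,
        transfer_faceChain _ hs hc, linkProj_faceChain hs hc, LinearMap.id_apply]
      by_cases hu : u ∈ s
      · have hlink : s.erase u ∈ link Γ {u} :=
          mem_link_singleton.2 ⟨notMem_erase u s, by rwa [insert_erase hu]⟩
        rw [faceChain_of_notMem fun h => h.2 hu, map_zero, zero_add, if_pos hu, map_smul,
          cone_faceChain hlink (by rw [card_erase_of_mem hu, hc, Nat.add_sub_cancel]),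
          insert_erase hu, faceSign_erase_self hu, smul_smul, faceSign_mul_self, one_smul]
      · rw [transfer_faceChain (Γ := deletion Γ u) _ ⟨hs, hu⟩ hc, if_neg hu, map_zero,
          add_zero]) z

theorem bdry_cone {Γ : Set (Finset V)} (hΓ : IsDown Γ) {u : V} {n : ℕ}
    (z : Chains K (link Γ {u}) (n + 1)) :
    bdry K hΓ (n + 1) (cone K u (n + 1) z) =
      transfer K Γ (n + 1) z - cone K u n (bdry K (link_down hΓ {u}) n z) :=
  LinearMap.congr_fun (f := bdry K hΓ (n + 1) ∘ₗ cone K u (n + 1))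
    (g := transfer K Γ (n + 1) - cone K u n ∘ₗ bdry K (link_down hΓ {u}) n)
    (Chains.linearMap_ext fun t ht hc => by
      obtain ⟨hut, hins⟩ := mem_link_singleton.1 ht
      have hfacet : ∀ v ∈ t, t.erase v ∈ link Γ {u} ∧ (t.erase v).card = n := fun v hv =>
        ⟨link_down hΓ {u} _ ht _ (erase_subset _ _),
          by rw [card_erase_of_mem hv, hc, Nat.add_sub_cancel]⟩
      rw [LinearMap.comp_apply, LinearMap.sub_apply, LinearMap.comp_apply, cone_faceChain ht hc,
        map_smul, bdry_faceChain hΓ hins (by rw [card_insert_of_notMem hut, hc]), sum_insert hut,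
        erase_insert hut, faceSign_insert_self hut, smul_add, smul_smul, faceSign_mul_self,
        one_smul, transfer_faceChain _ ht hc, bdry_faceChain _ ht hc, map_sum, sub_eq_add_neg,
        ← sum_neg_distrib, smul_sum]
      congr 1
      refine sum_congr rfl fun v hv => ?_
      rw [map_smul, cone_faceChain (hfacet v hv).1 (hfacet v hv).2, smul_smul, smul_smul,
        faceSign_mul_faceSign_insert hut hv, neg_smul,
        erase_insert_of_ne (ne_of_mem_of_not_mem hv hut).symm]) z

theorem bdry_cone_zero {Γ : Set (Finset V)} (hΓ : IsDown Γ) {u : V}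
    (z : Chains K (link Γ {u}) 0) : bdry K hΓ 0 (cone K u 0 z) = transfer K Γ 0 z :=
  LinearMap.congr_fun (f := bdry K hΓ 0 ∘ₗ cone K u 0) (g := transfer K Γ 0)
    (Chains.linearMap_ext fun t ht hc => by
      obtain rfl := card_eq_zero.1 hc
      have hu : ({u} : Finset V) ∈ Γ := (mem_link_singleton.1 ht).2
      have hsign : ∀ t : Finset V, t ⊆ {u} → faceSign K t u = 1 := fun t ht => by
        rw [faceSign, filter_false_of_mem fun w hw => (mem_singleton.1 (ht hw)).ge.not_gt,
          card_empty, pow_zero]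
      rw [LinearMap.comp_apply, cone_faceChain ht hc, map_smul, insert_empty,
        bdry_faceChain hΓ hu (card_singleton u), sum_singleton, erase_singleton,
        hsign _ (empty_subset _), hsign _ subset_rfl, one_smul, one_smul,
        transfer_faceChain _ ht hc]) z

theorem linkProj_bdry {Γ : Set (Finset V)} (hΓ : IsDown Γ) (u : V) {n : ℕ}
    (z : Chains K Γ (n + 2)) :
    linkProj K u n (bdry K hΓ (n + 1) z) =
      -bdry K (link_down hΓ {u}) n (linkProj K u (n + 1) z) :=
  LinearMap.congr_fun (f := linkProj K u n ∘ₗ bdry K hΓ (n + 1))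
    (g := -(bdry K (link_down hΓ {u}) n ∘ₗ linkProj K u (n + 1)))
    (Chains.linearMap_ext fun s hs hc => by
      have hfacet : ∀ v ∈ s, s.erase v ∈ Γ ∧ (s.erase v).card = n + 1 := fun v hv =>
        ⟨hΓ _ hs _ (erase_subset _ _), by rw [card_erase_of_mem hv, hc, Nat.add_sub_cancel]⟩
      rw [LinearMap.comp_apply, LinearMap.neg_apply, LinearMap.comp_apply,
        bdry_faceChain hΓ hs hc, map_sum, linkProj_faceChain hs hc]
      by_cases hu : u ∈ s
      · have hlink : s.erase u ∈ link Γ {u} :=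
          mem_link_singleton.2 ⟨notMem_erase u s, by rwa [insert_erase hu]⟩
        rw [← sum_erase_add _ _ hu, map_smul, linkProj_faceChain (hfacet u hu).1 (hfacet u hu).2,
          if_neg (notMem_erase u s), smul_zero, add_zero, if_pos hu, map_smul,
          bdry_faceChain _ hlink (hfacet u hu).2, smul_sum, ← sum_neg_distrib]
        refine sum_congr rfl fun v hv => ?_
        obtain ⟨hvu, hvs⟩ := mem_erase.1 hv
        rw [map_smul, linkProj_faceChain (hfacet v hvs).1 (hfacet v hvs).2,
          if_pos (mem_erase.2 ⟨hvu.symm, hu⟩), smul_smul, smul_smul, erase_right_comm,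
          faceSign_mul_faceSign_erase_swap hu hvs hvu.symm, neg_smul]
      · rw [if_neg hu, map_zero, neg_zero]
        refine sum_eq_zero fun v hv => ?_
        rw [map_smul, linkProj_faceChain (hfacet v hv).1 (hfacet v hv).2,
          if_neg fun h => hu (mem_of_mem_erase h), smul_zero]) z

end ChainMaps

section Homology

variable {V : Type*} [LinearOrder V] {K : Type*} [Field K]

variable (K) in
def HomologyVanishes {Δ : Set (Finset V)} (hΔ : IsDown Δ) (c : ℕ) : Prop :=
  cycles K hΔ c ≤ LinearMap.range (bdry K hΔ c)

theorem homologyVanishes_iff_subsingleton {Δ : Set (Finset V)} (hΔ : IsDown Δ) (c : ℕ) :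
    HomologyVanishes K hΔ c ↔ Subsingleton (RH K hΔ c) :=
  (Submodule.Quotient.subsingleton_iff.trans Submodule.comap_subtype_eq_top).symm

theorem not_homologyVanishes_iff_nontrivial {Δ : Set (Finset V)} (hΔ : IsDown Δ) (c : ℕ) :
    ¬HomologyVanishes K hΔ c ↔ Nontrivial (RH K hΔ c) := by
  rw [homologyVanishes_iff_subsingleton, not_subsingleton_iff_nontrivial]

theorem homologyVanishes_congr {Δ₁ Δ₂ : Set (Finset V)} (e : Δ₁ = Δ₂) (h₁ : IsDown Δ₁)
    (h₂ : IsDown Δ₂) {c : ℕ} : HomologyVanishes K h₁ c ↔ HomologyVanishes K h₂ c := by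
  subst e; rfl

theorem homologyVanishes_of_forall_card_ne {Δ : Set (Finset V)} (hΔ : IsDown Δ) {c : ℕ}
    (h : ∀ s ∈ Δ, s.card ≠ c) : HomologyVanishes K hΔ c := fun z _ => by
  rw [show z = 0 from Finsupp.ext fun s => absurd s.2.2 (h s.1 s.2.1)]
  exact zero_mem _

theorem mem_cycles_succ {Δ : Set (Finset V)} (hΔ : IsDown Δ) {c : ℕ}
    {z : Chains K Δ (c + 1)} :
    z ∈ cycles K hΔ (c + 1) ↔ bdry K hΔ c z = 0 :=
  LinearMap.mem_ker

theorem bdry_cone_of_mem_cycles {Γ : Set (Finset V)} (hΓ : IsDown Γ) {u : V} {c : ℕ}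
    {b : Chains K (link Γ {u}) c} (hb : b ∈ cycles K (link_down hΓ {u}) c) :
    bdry K hΓ c (cone K u c b) = transfer K Γ c b := by
  cases c with
  | zero => exact bdry_cone_zero hΓ b
  | succ m => rw [bdry_cone, (mem_cycles_succ _).1 hb, map_zero, sub_zero]

/-- Subtract the boundary of a cone over a filling of the `u`-coefficient of `y`. -/
theorem exists_deletion_chain_homologous {Γ : Set (Finset V)} (hΓ : IsDown Γ) {u : V} {c : ℕ}
    (hL : HomologyVanishes K (link_down hΓ {u}) c) (y : Chains K Γ (c + 1))
    (hy : bdry K hΓ c y ∈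
      LinearMap.range (transfer K Γ c : Chains K (deletion Γ u) c →ₗ[K] Chains K Γ c)) :
    ∃ a : Chains K (deletion Γ u) (c + 1),
      y - transfer K Γ (c + 1) a ∈ LinearMap.range (bdry K hΓ (c + 1)) ∧
        bdry K hΓ c (transfer K Γ (c + 1) a) = bdry K hΓ c y := by
  have hb : linkProj K u c y ∈ cycles K (link_down hΓ {u}) c := by
    cases c with
    | zero => exact Submodule.mem_top
    | succ m =>
      obtain ⟨x, hx⟩ := hy
      rw [mem_cycles_succ, ← neg_eq_zero, ← linkProj_bdry hΓ, ← hx,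
        linkProj_transfer (deletion_subset Γ u) fun s hs => hs.2]
  obtain ⟨w, hw⟩ := hL hb
  have hcone : bdry K hΓ (c + 1) (cone K u (c + 1) w) =
      transfer K Γ (c + 1) w - cone K u c (linkProj K u c y) := by
    rw [bdry_cone, hw]
  set y₂ := y + bdry K hΓ (c + 1) (cone K u (c + 1) w)
  have hy₂ : transfer K Γ (c + 1) (transfer K (deletion Γ u) (c + 1) y₂) = y₂ := by
    have hlink : linkProj K u c y₂ = 0 := by
      rw [map_add, hcone, map_sub, linkProj_cone,
        linkProj_transfer (link_singleton_subset hΓ u) fun s hs => (mem_link_singleton.1 hs).1]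
      abel
    simpa only [hlink, map_zero, add_zero] using transfer_add_cone_linkProj u y₂
  refine ⟨transfer K (deletion Γ u) (c + 1) y₂, ⟨-cone K u (c + 1) w, ?_⟩, ?_⟩
  · rw [hy₂, map_neg, sub_add_cancel_left]
  · rw [hy₂, map_add, hcone, map_sub, ← transfer_bdry (link_down hΓ {u}) hΓ
      (link_singleton_subset hΓ u), hw, bdry_cone_of_mem_cycles hΓ hb, sub_self, add_zero]

theorem homologyVanishes_succ_of_link_of_deletion {Γ : Set (Finset V)} (hΓ : IsDown Γ) {u : V}
    {c : ℕ} (hL : HomologyVanishes K (link_down hΓ {u}) c)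
    (hD : HomologyVanishes K (deletion_down hΓ u) (c + 1)) : HomologyVanishes K hΓ (c + 1) := by
  intro z hz
  rw [mem_cycles_succ] at hz
  obtain ⟨a, ⟨v, hv⟩, ha⟩ :=
    exists_deletion_chain_homologous hΓ hL z (by rw [hz]; exact zero_mem _)
  have ha_cycle : a ∈ cycles K (deletion_down hΓ u) (c + 1) := by
    rw [mem_cycles_succ,
      ← transfer_transfer (deletion_subset Γ u) (bdry K (deletion_down hΓ u) c a),
      transfer_bdry (deletion_down hΓ u) hΓ (deletion_subset Γ u), ha, hz, map_zero]
  obtain ⟨a', ha'⟩ := hD ha_cycle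
  refine ⟨v + transfer K Γ (c + 2) a', ?_⟩
  rw [map_add, ← transfer_bdry (deletion_down hΓ u) hΓ (deletion_subset Γ u), ha', hv,
    sub_add_cancel]

theorem homologyVanishes_deletion_of_link {Γ : Set (Finset V)} (hΓ : IsDown Γ) {u : V} {c : ℕ}
    (hΓc : HomologyVanishes K hΓ c) (hL : HomologyVanishes K (link_down hΓ {u}) c) :
    HomologyVanishes K (deletion_down hΓ u) c := by
  intro z hz
  have hz' : transfer K Γ c z ∈ cycles K hΓ c := by
    cases c with
    | zero => exact Submodule.mem_top
    | succ m =>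
      rw [mem_cycles_succ, ← transfer_bdry (deletion_down hΓ u) hΓ (deletion_subset Γ u),
        (mem_cycles_succ _).1 hz, map_zero]
  obtain ⟨y, hy⟩ := hΓc hz'
  obtain ⟨a, -, ha⟩ := exists_deletion_chain_homologous hΓ hL y ⟨z, hy.symm⟩
  refine ⟨a, ?_⟩
  rw [← transfer_transfer (deletion_subset Γ u) (bdry K (deletion_down hΓ u) c a),
    transfer_bdry (deletion_down hΓ u) hΓ (deletion_subset Γ u), ha, hy,
    transfer_transfer (deletion_subset Γ u)]

end Homology

section Descent

variable {V : Type*} [LinearOrder V] {K : Type*} [Field K]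

theorem mem_of_not_homologyVanishes_link {Δ : Set (Finset V)} (hΔ : IsDown Δ) {σ : Finset V}
    {c : ℕ} (h : ¬HomologyVanishes K (link_down hΔ σ) c) : σ ∈ Δ := by
  by_contra hσ
  exact h (homologyVanishes_of_forall_card_ne _ fun s hs _ => hσ (hΔ _ hs.2 _ subset_union_right))

theorem deletion_restrict_link_insert {Δ : Set (Finset V)} {σ W : Finset V} {u : V}
    (huW : u ∉ W) :
    deletion (restrict (link Δ σ) (insert u W)) u = restrict (link Δ σ) W := by
  rw [deletion_restrict, erase_insert huW]

theorem link_singleton_restrict_link_insert {Δ : Set (Finset V)} {σ W : Finset V} {u : V}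
    (huσ : u ∉ σ) (huW : u ∉ W) :
    link (restrict (link Δ σ) (insert u W)) {u} = restrict (link Δ (insert u σ)) W := by
  rw [link_singleton_restrict_link huσ (mem_insert_self u W), erase_insert huW]

/-- Enlarge the window `W` one vertex `u` at a time; when that kills the class, exactness
moves it into the link of `u` in the window, a window of the link of `insert u σ`. -/
theorem exists_superset_not_homologyVanishes_link_of_restrict [Fintype V]
    {Δ : Set (Finset V)} (hΔ : IsDown Δ) {c : ℕ} {σ W : Finset V}
    (h : ¬HomologyVanishes K (restrict_down (link_down hΔ σ) W) c) :
    ∃ τ, σ ⊆ τ ∧ ¬HomologyVanishes K (link_down hΔ τ) c := by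
  obtain ⟨s, hs⟩ : ∃ s, (W ∪ σ)ᶜ = s := ⟨_, rfl⟩
  induction s using Finset.induction_on generalizing σ W with
  | empty =>
    have hall : restrict (link Δ σ) W = link Δ σ := by
      rw [restrict_link_congr (W' := univ) fun v hv => ?_, restrict_univ]
      have hv' : v ∈ W ∪ σ := by rw [(compl_eq_empty_iff _).1 hs]; exact mem_univ v
      simpa [hv] using hv'
    exact ⟨σ, subset_rfl, fun hv => h ((homologyVanishes_congr hall.symm _ _).1 hv)⟩
  | insert u s hu ih =>
    have huWσ : u ∉ W ∪ σ := by rw [← mem_compl, hs]; exact mem_insert_self u s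
    obtain ⟨huW, huσ⟩ := not_or.1 (mem_union.not.1 huWσ)
    have hrest : ∀ {W' σ' : Finset V}, W' ∪ σ' = insert u (W ∪ σ) → (W' ∪ σ')ᶜ = s := by
      intro W' σ' e
      rw [e, compl_insert, hs, erase_insert hu]
    have hΓ := restrict_down (link_down hΔ σ) (insert u W)
    by_cases hG : HomologyVanishes K hΓ c
    · have hL : ¬HomologyVanishes K (restrict_down (link_down hΔ (insert u σ)) W) c := fun hL =>
        h <| (homologyVanishes_congr (deletion_restrict_link_insert huW) _ _).1 <|
          homologyVanishes_deletion_of_link hΓ hG <|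
            (homologyVanishes_congr (link_singleton_restrict_link_insert huσ huW).symm _ _).1 hL
      obtain ⟨τ, hστ, hτ⟩ := ih hL (hrest (union_insert _ _ _))
      exact ⟨τ, (subset_insert u σ).trans hστ, hτ⟩
    · exact ih hG (hrest (insert_union _ _ _))

theorem exists_ssuperset_not_homologyVanishes_link_of_restrict [Fintype V]
    {Δ : Set (Finset V)} (hΔ : IsDown Δ) {c : ℕ} {σ : Finset V} (W : Finset V)
    (h : ¬HomologyVanishes K (restrict_down (link_down hΔ σ) W) (c + 1)) :
    ∃ τ, σ ⊂ τ ∧ ¬HomologyVanishes K (link_down hΔ τ) c := by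
  induction W using Finset.induction_on with
  | empty =>
    refine absurd (homologyVanishes_of_forall_card_ne _ fun s hs => ?_) h
    rw [subset_empty.1 hs.2, card_empty]
    exact (Nat.succ_ne_zero c).symm
  | insert u W huW ih =>
    by_cases huσ : u ∈ σ
    · refine ih ((homologyVanishes_congr (restrict_link_congr fun v hv => ?_) _ _).not.1 h)
      rw [mem_insert, or_iff_right (ne_of_mem_of_not_mem huσ hv).symm]
    have hΓ := restrict_down (link_down hΔ σ) (insert u W)
    by_cases hL : HomologyVanishes K (link_down hΓ {u}) c
    · exact ih fun hD => h <| homologyVanishes_succ_of_link_of_deletion hΓ hL <|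
        (homologyVanishes_congr (deletion_restrict_link_insert huW).symm _ _).1 hD
    · obtain ⟨τ, hστ, hτ⟩ := exists_superset_not_homologyVanishes_link_of_restrict hΔ
        ((homologyVanishes_congr (link_singleton_restrict_link_insert huσ huW) _ _).not.1 hL)
      exact ⟨τ, (ssubset_insert huσ).trans_subset hστ, hτ⟩

theorem exists_ssuperset_not_homologyVanishes_link [Fintype V] {Δ : Set (Finset V)}
    (hΔ : IsDown Δ) {c : ℕ} {σ : Finset V}
    (h : ¬HomologyVanishes K (link_down hΔ σ) (c + 1)) :
    ∃ τ, σ ⊂ τ ∧ ¬HomologyVanishes K (link_down hΔ τ) c :=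
  exists_ssuperset_not_homologyVanishes_link_of_restrict hΔ univ
    ((homologyVanishes_congr (restrict_univ _) _ _).not.2 h)

theorem exists_superset_not_homologyVanishes_link_of_le [Fintype V] {Δ : Set (Finset V)}
    (hΔ : IsDown Δ) {c c' : ℕ} (hcc' : c ≤ c') {σ : Finset V}
    (h : ¬HomologyVanishes K (link_down hΔ σ) c') :
    ∃ τ, σ ⊆ τ ∧ ¬HomologyVanishes K (link_down hΔ τ) c := by
  induction c', hcc' using Nat.le_induction generalizing σ with
  | base => exact ⟨σ, subset_rfl, h⟩
  | succ n _ ih =>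
    obtain ⟨τ₁, hστ₁, hτ₁⟩ := exists_ssuperset_not_homologyVanishes_link hΔ h
    obtain ⟨τ, hτ₁τ, hτ⟩ := ih hτ₁
    exact ⟨τ, hστ₁.subset.trans hτ₁τ, hτ⟩

end Descent

end SRPure

open SRPure in
theorem link_homology_degree_antitone_of_isPR_general
    {V : Type*} [LinearOrder V] [Fintype V] (K : Type*) [Field K]
    (Δ : Set (Finset V)) (hΔ : IsDown Δ) (hPR : IsPR K hΔ)
    (σ₁ : Finset V) (hσ₁ : σ₁ ∈ Δ) (σ₂ : Finset V) (c₁ c₂ : ℕ)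
    (h₁ : Nontrivial (RH K (link_down hΔ σ₁) c₁))
    (h₂ : Nontrivial (RH K (link_down hΔ σ₂) c₂))
    (hcard : σ₁.card < σ₂.card) : c₂ < c₁ := by
  by_contra! hle
  obtain ⟨τ, hσ₂τ, hτ⟩ := exists_superset_not_homologyVanishes_link_of_le hΔ hle
    ((not_homologyVanishes_iff_nontrivial _ _).2 h₂)
  have hcard_eq := hPR σ₁ hσ₁ τ (mem_of_not_homologyVanishes_link hΔ hτ) c₁ h₁
    ((not_homologyVanishes_iff_nontrivial _ _).1 hτ)
  have := card_le_card hσ₂τ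
  omega

open SRPure in
/-- In a PR complex over `K`, if `σ₁, σ₂` are faces whose links have
nontrivial reduced homology in degrees `i₁, i₂` (cardinality indices `c₁ = i₁ + 1`,
`c₂ = i₂ + 1`) and `|σ₁| < |σ₂|`, then `i₁ > i₂`. -/
theorem link_homology_degree_antitone_of_isPR
    {V : Type*} [LinearOrder V] [Fintype V] (K : Type*) [Field K]
    (Δ : Set (Finset V)) (hΔ : IsDown Δ) (hPR : IsPR K hΔ)
    (σ₁ : Finset V) (hσ₁ : σ₁ ∈ Δ) (σ₂ : Finset V) (hσ₂ : σ₂ ∈ Δ) (c₁ c₂ : ℕ)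
    (h₁ : Nontrivial (RH K (link_down hΔ σ₁) c₁))
    (h₂ : Nontrivial (RH K (link_down hΔ σ₂) c₂))
    (hcard : σ₁.card < σ₂.card) : c₂ < c₁ :=
  link_homology_degree_antitone_of_isPR_general K Δ hΔ hPR σ₁ hσ₁ σ₂ c₁ c₂ h₁ h₂ hcard
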